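/- Let f: ℕ → ℝ≥0 satisfy 0 < f(k) < f(k−1) + f(2) for every k ≥ 3. Then for every n ≥ 2 and every tree T with n leaves, 𝔠_{sd,f}(T) ≤ ((f(0)+f(2))/(2√2))·(n−1)(n−2), with equality if and only if T is isomorphic to the comb K_n. Hence 𝔠_{sd,f} attains its maximum on 𝒯*_n exactly at the comb. -/

import Mathlib

/-- Rooted trees encoded as a root together with the list of subtrees
rooted at its children. -/
inductive MTree : Type
  | node : List MTree → MTree

namespace MTree

/-- Number of leaves of a tree (a single node counts as one leaf). -/
def leafCount : MTree → ℕ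
  | node ts => max 1 (ts.attach.map (fun x => leafCount x.1)).sum
decreasing_by
  have := List.sizeOf_lt_of_mem x.2
  simp only [node.sizeOf_spec]; omega

/-- `deltaF f T = Σ_{v ∈ V(T)} f (deg v)`, the `f`-size of `T`. -/
noncomputable def deltaF (f : ℕ → ℝ) : MTree → ℝ
  | node ts => f ts.length + (ts.attach.map (fun x => deltaF f x.1)).sum
decreasing_by
  have := List.sizeOf_lt_of_mem x.2
  simp only [node.sizeOf_spec]; omega

/-- The Colless-like index relative to a "dissimilarity" `D` and a function `f`:
the sum, over all internal nodes `v`, of `D` applied to the list of `f`-sizes of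
the subtrees rooted at the children of `v`. -/
noncomputable def cIndex (D : List ℝ → ℝ) (f : ℕ → ℝ) : MTree → ℝ
  | node ts => (if ts.isEmpty then 0 else D (ts.map (deltaF f)))
      + (ts.attach.map (fun x => cIndex D f x.1)).sum
decreasing_by
  have := List.sizeOf_lt_of_mem x.2
  simp only [node.sizeOf_spec]; omega

/-- The Colless index of a (bifurcating) tree: the sum over the internal nodes of the
absolute value of the difference of the numbers of leaves of the two child subtrees. -/
def colless : MTree → ℕ
  | node ts =>
      (match ts with
       | [a, b] => ((a.leafCount : ℤ) - (b.leafCount : ℤ)).natAbs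
       | _ => 0)
      + (ts.attach.map (fun x => colless x.1)).sum
decreasing_by
  have := List.sizeOf_lt_of_mem x.2
  simp only [node.sizeOf_spec]; omega

/-- The quadratic Colless index of a (bifurcating) tree. -/
def collessSq : MTree → ℕ
  | node ts =>
      (match ts with
       | [a, b] => ((a.leafCount : ℤ) - (b.leafCount : ℤ)).natAbs ^ 2
       | _ => 0)
      + (ts.attach.map (fun x => collessSq x.1)).sum
decreasing_by
  have := List.sizeOf_lt_of_mem x.2
  simp only [node.sizeOf_spec]; omega

/-- A tree in the sense of the paper: no node of out-degree 1. -/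
inductive WellFormed : MTree → Prop
  | node {ts : List MTree} : ts.length ≠ 1 → (∀ t ∈ ts, WellFormed t) →
      WellFormed (node ts)

/-- A bifurcating tree: every internal node has out-degree exactly 2. -/
inductive Bifurcating : MTree → Prop
  | node {ts : List MTree} : (ts.length = 0 ∨ ts.length = 2) →
      (∀ t ∈ ts, Bifurcating t) → Bifurcating (node ts)

/-- Isomorphism of (list-encoded) trees: the lists of child subtrees match up to
a permutation and recursively isomorphic subtrees. -/
inductive Iso : MTree → MTree → Prop
  | node {ts us vs : List MTree} :
      List.Forall₂ Iso ts vs → vs.Perm us → Iso (node ts) (node us)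

/-- A tree is fully symmetric when, for every internal node, the subtrees rooted at
its children are pairwise isomorphic. -/
inductive FullySymmetric : MTree → Prop
  | node {ts : List MTree} : (∀ s ∈ ts, ∀ t ∈ ts, Iso s t) →
      (∀ t ∈ ts, FullySymmetric t) → FullySymmetric (node ts)

/-- The comb `K_n` with `n ≥ 1` leaves. -/
def comb : ℕ → MTree
  | 0 => node []
  | 1 => node []
  | n + 2 => node [node [], comb (n + 1)]

/-- The star `FS_n`, whose root has `n` children, all of them leaves. -/
def star (n : ℕ) : MTree := node (List.replicate n (node []))

/-- The median of a list of real numbers. -/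
noncomputable def median (l : List ℝ) : ℝ :=
  let s := l.mergeSort (fun a b => a ≤ b)
  if l.length % 2 = 1 then s.getD (l.length / 2) 0
  else (s.getD (l.length / 2 - 1) 0 + s.getD (l.length / 2) 0) / 2

/-- The mean deviation from the median of a list of real numbers. -/
noncomputable def MDM (l : List ℝ) : ℝ :=
  (l.map (fun x => |x - median l|)).sum / l.length

/-- The sample variance of a list of real numbers. -/
noncomputable def svar (l : List ℝ) : ℝ :=
  (l.map (fun x => (x - l.sum / l.length) ^ 2)).sum / ((l.length : ℝ) - 1)

/-- The sample standard deviation of a list of real numbers. -/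
noncomputable def ssd (l : List ℝ) : ℝ := Real.sqrt (svar l)

end MTree

/-! Write `C = (f 0 + f 2) / (2√2)` and `g(x) = C (x - 1)(x - 2)`. Iterating
`f k < f (k - 1) + f 2` gives `f k ≤ (k - 1) f 2`, so a tree with `m` leaves has `f`-size in
`[f 0, m f 0 + (m - 1) f 2]`. For a node whose children have `n₁, …, n_k` leaves (`k ≥ 2`), the
largest being `N`, the range bound `sd ≤ range/√2` then bounds the balance value at the node by
`(N - 1)(f 0 + f 2)/√2 = 2C(N - 1)`. On the other hand
`g(∑ nᵢ) - ∑ g(nᵢ) = C · ((∑ nᵢ - 1)(∑ nᵢ - 2) - ∑ (nᵢ - 1)(nᵢ - 2)) ≥ 2C(N - 1)`, with equality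
only for two children one of which is a leaf. Induction on the tree gives `𝔠_{sd,f}(T) ≤ g(n)`,
and equality forces every internal node to have a leaf child and another child that is again a
comb. -/

namespace List

theorem Forall₂.map_eq_map {α β γ : Type*} {R : α → β → Prop} {F : α → γ} {G : β → γ}
    {as : List α} {bs : List β} (h : Forall₂ R as bs) (hR : ∀ a ∈ as, ∀ b, R a b → F a = G b) :
    as.map F = bs.map G := by
  induction h with
  | nil => rfl
  | cons hab _ ih =>
    rw [map_cons, map_cons, hR _ mem_cons_self _ hab,
      ih fun a ha => hR a (mem_cons_of_mem _ ha)]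

theorem natCast_length_le_sum_of_one_le {l : List ℝ} (h : ∀ x ∈ l, 1 ≤ x) :
    (l.length : ℝ) ≤ l.sum := by
  simpa using l.card_nsmul_le_sum 1 h

end List

namespace MTree

@[induction_eliminator]
theorem ind {motive : MTree → Prop} (node : ∀ ts, (∀ t ∈ ts, motive t) → motive (.node ts)) :
    ∀ T, motive T
  | .node ts => node ts fun t ht =>
      have := List.sizeOf_lt_of_mem ht
      ind node t
decreasing_by simp only [MTree.node.sizeOf_spec]; omega

theorem leafCount_node (ts : List MTree) :
    (node ts).leafCount = max 1 (ts.map leafCount).sum := by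
  rw [leafCount, List.attach_map_val]

theorem deltaF_node (f : ℕ → ℝ) (ts : List MTree) :
    deltaF f (node ts) = f ts.length + (ts.map (deltaF f)).sum := by
  rw [deltaF, List.attach_map_val]

theorem cIndex_node (D : List ℝ → ℝ) (f : ℕ → ℝ) (ts : List MTree) :
    cIndex D f (node ts) =
      (if ts.isEmpty then 0 else D (ts.map (deltaF f))) + (ts.map (cIndex D f)).sum := by
  rw [cIndex, List.attach_map_val]

theorem one_le_leafCount (T : MTree) : 1 ≤ T.leafCount := by
  cases T with
  | node ts => rw [leafCount_node]; exact le_max_left _ _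

theorem length_le_sum_leafCount (ts : List MTree) : ts.length ≤ (ts.map leafCount).sum := by
  simpa using List.length_le_sum_of_one_le (ts.map leafCount) (by simp [one_le_leafCount])

theorem leafCount_node_of_ne_nil {ts : List MTree} (h : ts ≠ []) :
    (node ts).leafCount = (ts.map leafCount).sum := by
  have := length_le_sum_leafCount ts
  have := List.length_pos_iff.mpr h
  rw [leafCount_node]; omega

theorem eq_leaf_of_leafCount_eq_one {T : MTree} (hT : T.WellFormed) (h : T.leafCount = 1) :
    T = node [] := by
  obtain @⟨ts, hlen, -⟩ := hT
  rcases eq_or_ne ts [] with rfl | hts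
  · rfl
  have := length_le_sum_leafCount ts
  have := List.length_pos_iff.mpr hts
  rw [leafCount_node_of_ne_nil hts] at h
  omega

noncomputable def quadGap (l : List ℝ) : ℝ :=
  (l.sum - 1) * (l.sum - 2) - (l.map fun x => (x - 1) * (x - 2)).sum

theorem quadGap_cons (x : ℝ) (l : List ℝ) :
    quadGap (x :: l) = 2 * (x - 1) + quadGap l + 2 * x * (l.sum - 1) := by
  simp only [quadGap, List.sum_cons, List.map_cons]
  ring

theorem quadGap_perm {l l' : List ℝ} (h : l.Perm l') : quadGap l = quadGap l' := by
  rw [quadGap, quadGap, h.sum_eq, (h.map _).sum_eq]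

theorem quadGap_nonneg {l : List ℝ} (hl : l ≠ []) (h : ∀ x ∈ l, 1 ≤ x) : 0 ≤ quadGap l := by
  induction l with
  | nil => exact absurd rfl hl
  | cons x l ih =>
    have hx := h x List.mem_cons_self
    rw [quadGap_cons]
    rcases eq_or_ne l [] with rfl | hne
    · simp only [quadGap, List.sum_nil, List.map_nil]
      linarith
    have h' : ∀ y ∈ l, 1 ≤ y := fun y hy => h y (List.mem_cons_of_mem x hy)
    have hsum : 1 ≤ l.sum := le_trans (by exact_mod_cast List.length_pos_iff.mpr hne)
      (List.natCast_length_le_sum_of_one_le h')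
    nlinarith [ih hne h']

section QuadGapOfMem

variable {l : List ℝ} {N : ℝ} (h : ∀ x ∈ l, 1 ≤ x) (hl : 2 ≤ l.length) (hN : N ∈ l)
include h hl hN

theorem exists_perm_cons_quadGap_eq :
    ∃ r : List ℝ, l.Perm (N :: r) ∧ 0 ≤ quadGap r ∧ 1 ≤ r.sum ∧ (∀ x ∈ r, 1 ≤ x) ∧
      quadGap l = 2 * (N - 1) + quadGap r + 2 * N * (r.sum - 1) := by
  have hperm := List.perm_cons_erase hN
  have hr : ∀ x ∈ l.erase N, 1 ≤ x := fun x hx => h x (List.mem_of_mem_erase hx)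
  have hlen : 1 ≤ (l.erase N).length := by rw [List.length_erase_of_mem hN]; omega
  refine ⟨l.erase N, hperm, quadGap_nonneg (List.ne_nil_of_length_pos hlen) hr, ?_, hr, ?_⟩
  · exact le_trans (by exact_mod_cast hlen) (List.natCast_length_le_sum_of_one_le hr)
  · rw [quadGap_perm hperm, quadGap_cons]

theorem two_mul_sub_one_le_quadGap : 2 * (N - 1) ≤ quadGap l := by
  obtain ⟨r, -, hr, hsum, -, hgap⟩ := exists_perm_cons_quadGap_eq h hl hN
  nlinarith [h N hN]

theorem perm_pair_of_quadGap_eq (heq : quadGap l = 2 * (N - 1)) : l.Perm [N, 1] := by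
  obtain ⟨r, hperm, hr, hsum, hr1, hgap⟩ := exists_perm_cons_quadGap_eq h hl hN
  have hN1 := h N hN
  have hsum1 : r.sum = 1 := by nlinarith
  have hlen : r.length = 1 := by
    have h0 : r ≠ [] := by rintro rfl; simp at hsum1
    have := List.length_pos_iff.mpr h0
    have : (r.length : ℝ) ≤ 1 := hsum1 ▸ List.natCast_length_le_sum_of_one_le hr1
    have : r.length ≤ 1 := by exact_mod_cast this
    omega
  obtain ⟨x, rfl⟩ := List.length_eq_one_iff.mp hlen
  rw [List.sum_singleton] at hsum1
  rwa [hsum1] at hperm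

end QuadGapOfMem

theorem ssd_pair (x y : ℝ) : ssd [x, y] = |x - y| / √2 := by
  have : svar [x, y] = (x - y) ^ 2 / 2 := by
    simp only [svar, List.sum_cons, List.sum_nil, List.length_cons, List.length_nil, List.map_cons,
      List.map_nil]
    push_cast
    ring
  rw [ssd, this, Real.sqrt_div (sq_nonneg _), Real.sqrt_sq_eq_abs]

theorem ssd_perm {l l' : List ℝ} (h : l.Perm l') : ssd l = ssd l' := by
  rw [ssd, ssd, svar, svar, h.sum_eq, h.length_eq, (h.map _).sum_eq]

/-- Popoviciu-type bound: each `x ∈ [a, b]` has `(x - m)² ≤ (a + b - 2m) x + m² - a b`, and summing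
gives `∑ (x - m)² ≤ k (b - m)(m - a) ≤ k (b - a)² / 4`, while `k / (k - 1) ≤ 2`. -/
theorem svar_le_of_mem_Icc {l : List ℝ} {a b : ℝ} (hl : 2 ≤ l.length)
    (h : ∀ x ∈ l, x ∈ Set.Icc a b) : svar l ≤ (b - a) ^ 2 / 2 := by
  set m : ℝ := l.sum / l.length
  have hk : (2 : ℝ) ≤ l.length := by exact_mod_cast hl
  have hsum : l.sum = l.length * m := by rw [mul_div_cancel₀]; linarith
  have hpt : ∀ x ∈ l, (x - m) ^ 2 ≤ (a + b - 2 * m) * x + (m ^ 2 - a * b) := by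
    intro x hx
    obtain ⟨hxa, hxb⟩ := h x hx
    nlinarith
  have hsq : (l.map fun x => (x - m) ^ 2).sum ≤ l.length * ((b - a) ^ 2 / 4) :=
    calc (l.map fun x => (x - m) ^ 2).sum
        ≤ (l.map fun x => (a + b - 2 * m) * x + (m ^ 2 - a * b)).sum := List.sum_le_sum hpt
      _ = (a + b - 2 * m) * l.sum + l.length * (m ^ 2 - a * b) := by
        rw [List.sum_map_add, List.sum_map_mul_left, List.map_id', List.map_const',
          List.sum_replicate, nsmul_eq_mul]
      _ ≤ l.length * ((b - a) ^ 2 / 4) := by rw [hsum]; nlinarith [sq_nonneg (a + b - 2 * m)]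
  rw [svar, div_le_iff₀ (by linarith)]
  nlinarith [sq_nonneg (b - a)]

theorem ssd_le_of_mem_Icc {l : List ℝ} {a b : ℝ} (hl : 2 ≤ l.length)
    (h : ∀ x ∈ l, x ∈ Set.Icc a b) : ssd l ≤ (b - a) / √2 := by
  obtain ⟨x, hx⟩ := List.exists_mem_of_length_pos (by omega : 0 < l.length)
  have hab : 0 ≤ b - a := by linarith [(h x hx).1, (h x hx).2]
  calc ssd l ≤ √((b - a) ^ 2 / 2) := Real.sqrt_le_sqrt (svar_le_of_mem_Icc hl h)
    _ = (b - a) / √2 := by rw [Real.sqrt_div (sq_nonneg _), Real.sqrt_sq hab]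

section SizeBounds

variable {f : ℕ → ℝ}

theorem apply_le_sub_one_mul_apply_two (hf : ∀ k, 3 ≤ k → f k ≤ f (k - 1) + f 2) {k : ℕ}
    (hk : 2 ≤ k) : f k ≤ (k - 1) * f 2 := by
  induction k, hk using Nat.le_induction with
  | base => norm_num
  | succ k hk ih =>
    have := hf (k + 1) (by omega)
    rw [Nat.add_sub_cancel] at this
    push_cast
    linarith

theorem apply_zero_le_deltaF (hf0 : ∀ k, 0 ≤ f k) (T : MTree) : f 0 ≤ deltaF f T := by
  induction T with
  | node ts ih =>
    rw [deltaF_node]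
    rcases ts with _ | ⟨t, ts⟩
    · simp
    have hts : 0 ≤ (ts.map (deltaF f)).sum :=
      List.sum_nonneg (by simpa using fun s hs => (hf0 0).trans (ih s (List.mem_cons_of_mem t hs)))
    simp only [List.map_cons, List.sum_cons]
    linarith [hf0 (t :: ts).length, ih t List.mem_cons_self]

theorem deltaF_le (hf : ∀ k, 3 ≤ k → f k ≤ f (k - 1) + f 2) {T : MTree} (hT : T.WellFormed) :
    deltaF f T ≤ T.leafCount * f 0 + (T.leafCount - 1) * f 2 := by
  induction hT with
  | @node ts hlen _ ih =>
    rcases eq_or_ne ts [] with rfl | hne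
    · simp [deltaF_node, leafCount_node]
    have hk : 2 ≤ ts.length := by have := List.length_pos_iff.mpr hne; omega
    rw [deltaF_node, leafCount_node_of_ne_nil hne]
    calc f ts.length + (ts.map (deltaF f)).sum
        ≤ (ts.length - 1) * f 2 + (ts.map fun t => (f 0 + f 2) * t.leafCount + -f 2).sum :=
          add_le_add (apply_le_sub_one_mul_apply_two hf hk)
            (List.sum_le_sum fun t ht => by linarith [ih t ht])
      _ = ((ts.map leafCount).sum : ℕ) * f 0 + (((ts.map leafCount).sum : ℕ) - 1) * f 2 := by
        rw [List.sum_map_add, List.sum_map_mul_left, List.map_const', List.sum_replicate,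
          nsmul_eq_mul, Nat.cast_list_sum, List.map_map]
        simp only [Function.comp_def]
        ring

theorem ssd_map_deltaF_le (hf0 : ∀ k, 0 ≤ f k) (hf : ∀ k, 3 ≤ k → f k ≤ f (k - 1) + f 2)
    {ts : List MTree} (hlen : 2 ≤ ts.length) (hW : ∀ t ∈ ts, t.WellFormed) {N : ℕ}
    (hN : ∀ t ∈ ts, t.leafCount ≤ N) :
    ssd (ts.map (deltaF f)) ≤ (N - 1) * (f 0 + f 2) / √2 := by
  refine (ssd_le_of_mem_Icc (a := f 0) (b := N * f 0 + (N - 1) * f 2) (by simpa) ?_).trans_eq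
    (by ring)
  simp only [List.forall_mem_map]
  intro t ht
  refine ⟨apply_zero_le_deltaF hf0 t, (deltaF_le hf (hW t ht)).trans ?_⟩
  have : (t.leafCount : ℝ) ≤ N := by exact_mod_cast hN t ht
  nlinarith [hf0 0, hf0 2]

end SizeBounds

noncomputable def combBound (f : ℕ → ℝ) (x : ℝ) : ℝ :=
  (f 0 + f 2) / (2 * √2) * (x - 1) * (x - 2)

theorem combBound_sum (f : ℕ → ℝ) (l : List ℝ) :
    combBound f l.sum = (f 0 + f 2) / (2 * √2) * quadGap l + (l.map (combBound f)).sum := by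
  have h : combBound f = fun x => (f 0 + f 2) / (2 * √2) * ((x - 1) * (x - 2)) := by
    funext x; rw [combBound, mul_assoc]
  rw [h, List.sum_map_mul_left, quadGap]
  ring

theorem combBound_add_one (f : ℕ → ℝ) (x : ℝ) :
    combBound f (x + 1) = (x - 1) * (f 0 + f 2) / √2 + combBound f x := by
  have : √2 ≠ 0 := by positivity
  simp only [combBound]
  field_simp
  ring

theorem deltaF_leaf (f : ℕ → ℝ) : deltaF f (node []) = f 0 := by
  simp [deltaF_node]

theorem cIndex_leaf (D : List ℝ → ℝ) (f : ℕ → ℝ) : cIndex D f (node []) = 0 := by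
  simp [cIndex_node]

theorem cIndex_ssd_pair (f : ℕ → ℝ) (a b : MTree) :
    cIndex ssd f (node [a, b]) =
      |deltaF f a - deltaF f b| / √2 + cIndex ssd f a + cIndex ssd f b := by
  simp only [cIndex_node, List.isEmpty_cons, Bool.false_eq_true, if_false, List.map_cons,
    List.map_nil, ssd_pair, List.sum_cons, List.sum_nil]
  ring

theorem comb_add_one {n : ℕ} (h : 1 ≤ n) : comb (n + 1) = node [node [], comb n] := by
  obtain ⟨m, rfl⟩ := Nat.exists_eq_add_of_le' h
  rfl

section Comb

variable (f : ℕ → ℝ)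

theorem deltaF_comb {n : ℕ} (h : 1 ≤ n) : deltaF f (comb n) = n * f 0 + (n - 1) * f 2 := by
  induction n, h using Nat.le_induction with
  | base => simp [comb, deltaF_node]
  | succ n hn ih =>
    rw [comb_add_one hn, deltaF_node]
    simp only [List.length_cons, List.length_nil, List.map_cons, List.map_nil, List.sum_cons,
      List.sum_nil, deltaF_leaf, ih]
    push_cast
    ring

theorem cIndex_comb (hf : 0 ≤ f 0 + f 2) {n : ℕ} (h : 1 ≤ n) :
    cIndex ssd f (comb n) = combBound f n := by
  induction n, h using Nat.le_induction with
  | base => simp [comb, cIndex_node, combBound]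
  | succ n hn ih =>
    have hn' : (1 : ℝ) ≤ n := by exact_mod_cast hn
    rw [comb_add_one hn, cIndex_ssd_pair, deltaF_leaf, cIndex_leaf, deltaF_comb f hn, ih,
      Nat.cast_add_one, combBound_add_one, abs_of_nonpos (by nlinarith)]
    ring

end Comb

theorem iso_leaf : (node []).Iso (node []) := .node .nil (.refl [])

theorem iso_comb_node_leaf_left {a : MTree} (ha : a.Iso (comb a.leafCount)) :
    (node [node [], a]).Iso (comb (node [node [], a]).leafCount) := by
  have : (node [node [], a]).leafCount = a.leafCount + 1 := by
    simp [leafCount_node_of_ne_nil, leafCount_node, add_comm]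
  rw [this, comb_add_one (one_le_leafCount a)]
  exact .node (.cons iso_leaf (.cons ha .nil)) (.refl _)

theorem iso_comb_node_leaf_right {a : MTree} (ha : a.Iso (comb a.leafCount)) :
    (node [a, node []]).Iso (comb (node [a, node []]).leafCount) := by
  have : (node [a, node []]).leafCount = a.leafCount + 1 := by
    simp [leafCount_node_of_ne_nil, leafCount_node]
  rw [this, comb_add_one (one_le_leafCount a)]
  exact .node (.cons ha (.cons iso_leaf .nil)) (.swap _ _ _)

section IsoInvariance

variable {f : ℕ → ℝ}

theorem deltaF_eq_of_iso {T U : MTree} (h : T.Iso U) : deltaF f T = deltaF f U := by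
  induction T generalizing U with
  | node ts ih =>
    obtain ⟨hF, hP⟩ := h
    rw [deltaF_node, deltaF_node, hF.length_eq, hP.length_eq,
      hF.map_eq_map fun t ht u htu => ih t ht htu, (hP.map _).sum_eq]

theorem cIndex_eq_of_iso {T U : MTree} (h : T.Iso U) : cIndex ssd f T = cIndex ssd f U := by
  induction T generalizing U with
  | node ts ih =>
    obtain ⟨hF, hP⟩ := h
    rw [cIndex_node, cIndex_node, hF.map_eq_map fun t _ u htu => deltaF_eq_of_iso htu,
      hF.map_eq_map fun t ht u htu => ih t ht htu, (hP.map _).sum_eq,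
      ssd_perm (hP.map _)]
    congr 2
    simp only [List.isEmpty_iff, ← List.length_eq_zero_iff, hF.length_eq, hP.length_eq]

end IsoInvariance

theorem combBound_leafCount_node (f : ℕ → ℝ) {ts : List MTree} (hne : ts ≠ []) :
    combBound f (node ts).leafCount =
      (f 0 + f 2) / (2 * √2) * quadGap (ts.map fun t => (t.leafCount : ℝ)) +
        (ts.map fun t => combBound f t.leafCount).sum := by
  rw [leafCount_node_of_ne_nil hne, Nat.cast_list_sum, List.map_map, combBound_sum, List.map_map]
  rfl

theorem cIndex_le_combBound {f : ℕ → ℝ} (hf0 : ∀ k, 0 ≤ f k)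
    (hf : ∀ k, 3 ≤ k → f k ≤ f (k - 1) + f 2) (hf2 : 0 < f 2) {T : MTree} (hT : T.WellFormed) :
    cIndex ssd f T ≤ combBound f T.leafCount ∧
      (cIndex ssd f T = combBound f T.leafCount → T.Iso (comb T.leafCount)) := by
  induction hT with
  | @node ts hlen hW ih =>
  rcases eq_or_ne ts [] with rfl | hne
  · simpa [cIndex_node, leafCount_node, combBound, comb] using iso_leaf
  have hk : 2 ≤ ts.length := by have := List.length_pos_iff.mpr hne; omega
  classical
  obtain ⟨t₀, ht₀, hmax⟩ := ts.toFinset.exists_max_image leafCount (by simpa using hne)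
  simp only [List.mem_toFinset] at ht₀ hmax
  set ns := ts.map fun t => (t.leafCount : ℝ)
  set C := (f 0 + f 2) / (2 * √2)
  have hC : 0 < C := by have := hf0 0; positivity
  have hns : ∀ x ∈ ns, 1 ≤ x := by simp [ns, one_le_leafCount]
  have hsd : ssd (ts.map (deltaF f)) ≤ C * (2 * (t₀.leafCount - 1)) :=
    (ssd_map_deltaF_le hf0 hf hk hW hmax).trans_eq (by simp only [C]; field_simp)
  have hgap := two_mul_sub_one_le_quadGap hns (by simpa [ns]) (List.mem_map_of_mem ht₀)
  have hsum : (ts.map (cIndex ssd f)).sum ≤ (ts.map fun t => combBound f t.leafCount).sum :=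
    List.sum_le_sum fun t ht => (ih t ht).1
  rw [cIndex_node, if_neg (by simpa using hne), combBound_leafCount_node f hne]
  refine ⟨by nlinarith, fun heq => ?_⟩
  have hperm := perm_pair_of_quadGap_eq hns (by simpa [ns]) (List.mem_map_of_mem ht₀)
    (by nlinarith)
  have hchildren : (ts.map (cIndex ssd f)).sum = (ts.map fun t => combBound f t.leafCount).sum := by
    nlinarith
  obtain ⟨a, b, rfl⟩ := List.length_eq_two.mp (by simpa [ns] using hperm.length_eq)
  have hone : 1 = a.leafCount ∨ 1 = b.leafCount := by
    have : (1 : ℝ) = a.leafCount ∨ (1 : ℝ) = b.leafCount := by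
      simpa [ns] using hperm.symm.subset (by simp : (1 : ℝ) ∈ [_, 1])
    exact_mod_cast this
  obtain ⟨ha, ha_iso⟩ := ih a (by simp)
  obtain ⟨hb, hb_iso⟩ := ih b (by simp)
  simp only [List.map_cons, List.map_nil, List.sum_cons, List.sum_nil] at hchildren
  rcases hone with h1 | h1
  · obtain rfl := eq_leaf_of_leafCount_eq_one (hW _ (by simp)) h1.symm
    exact iso_comb_node_leaf_left (hb_iso (by linarith))
  · obtain rfl := eq_leaf_of_leafCount_eq_one (hW _ (by simp)) h1.symm
    exact iso_comb_node_leaf_right (ha_iso (by linarith))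

end MTree

theorem cIndex_sd_le_comb_general (f : ℕ → ℝ) (hf0 : ∀ n, 0 ≤ f n)
    (hf : ∀ k, 3 ≤ k → 0 < f k ∧ f k < f (k - 1) + f 2)
    (n : ℕ) (T : MTree) (hT : T.WellFormed) (hTn : T.leafCount = n) :
    MTree.cIndex MTree.ssd f T ≤
      (f 0 + f 2) / (2 * Real.sqrt 2) * ((n : ℝ) - 1) * ((n : ℝ) - 2) ∧
    (MTree.cIndex MTree.ssd f T =
        (f 0 + f 2) / (2 * Real.sqrt 2) * ((n : ℝ) - 1) * ((n : ℝ) - 2) ↔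
      T.Iso (MTree.comb n)) := by
  have hf2 : 0 < f 2 := by
    obtain ⟨h3, h3'⟩ := hf 3 le_rfl
    linarith [(h3' : f 3 < f 2 + f 2)]
  obtain ⟨hle, hiso⟩ := MTree.cIndex_le_combBound hf0 (fun k hk => (hf k hk).2.le) hf2 hT
  subst hTn
  refine ⟨hle, hiso, fun h => ?_⟩
  rw [MTree.cIndex_eq_of_iso h, MTree.cIndex_comb f (by linarith [hf0 0]) T.one_le_leafCount]
  rfl

/-- Theorem 18 for `D = sd`: if `0 < f k < f (k-1) + f 2` for all `k ≥ 3`, then on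
trees with `n ≥ 2` leaves the index `𝔠_{sd,f}` is at most
`(f 0 + f 2)/(2√2) · (n-1)(n-2)`, with equality exactly at the comb `K_n`. -/
theorem cIndex_sd_le_comb (f : ℕ → ℝ) (hf0 : ∀ n, 0 ≤ f n)
    (hf : ∀ k, 3 ≤ k → 0 < f k ∧ f k < f (k - 1) + f 2)
    (n : ℕ) (hn : 2 ≤ n) (T : MTree) (hT : T.WellFormed) (hTn : T.leafCount = n) :
    MTree.cIndex MTree.ssd f T ≤
      (f 0 + f 2) / (2 * Real.sqrt 2) * ((n : ℝ) - 1) * ((n : ℝ) - 2) ∧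
    (MTree.cIndex MTree.ssd f T =
        (f 0 + f 2) / (2 * Real.sqrt 2) * ((n : ℝ) - 1) * ((n : ℝ) - 2) ↔
      T.Iso (MTree.comb n)) :=
  cIndex_sd_le_comb_general f hf0 hf n T hT hTn
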